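/- Let C and D = y_1 … y_n be reflexive digraph cycles with D non-contractible, let i be a vertex of D with σ^i(D) ≤* C, and let Φ_i^M be the maximum element of Mon_1(C,D;i) (the monotone wind-1 map whose selection function finds the left-most copy of σ^i(D) as a *-substring of C). Then there is a monotone one-step up edge from Φ_i^M to some map in Mon_1(C,D;i+1) if and only if the string σ^i(D)y_{i+1}, obtained from σ^i(D) by appending its first letter, is a *-substring of C. -/

import Mathlib

open scoped Classical

namespace Recon

/-- Orientation letters for edges of a digraph cycle: `+`, `-`, `*`. -/
inductive Orient : Type
  | plus
  | minus
  | star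
deriving DecidableEq

/-- A forward arc is allowed along an edge with this orientation letter. -/
def Orient.fwd : Orient → Prop
  | Orient.plus => True
  | Orient.minus => False
  | Orient.star => True

/-- A backward arc is allowed along an edge with this orientation letter. -/
def Orient.bwd : Orient → Prop
  | Orient.plus => False
  | Orient.minus => True
  | Orient.star => True

/-- The arc relation of the reflexive digraph cycle on `ZMod m` whose orientation
string is `f`, where `f c` is the orientation of the edge from `c` to `c + 1`. -/
def cycRel {m : ℕ} (f : ZMod m → Orient) (u v : ZMod m) : Prop :=
  u = v ∨ (v = u + 1 ∧ (f u).fwd) ∨ (u = v + 1 ∧ (f v).bwd)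

/-- `φ` is a digraph homomorphism. -/
def IsHom {α β : Type*} (rG : α → α → Prop) (rH : β → β → Prop) (φ : α → β) : Prop :=
  ∀ u v, rG u v → rH (φ u) (φ v)

/-- The arc relation of the Hom-graph `Hom(G,H)`. -/
def HomArc {α β : Type*} (rG : α → α → Prop) (rH : β → β → Prop) (φ ψ : α → β) : Prop :=
  ∀ u v, rG u v → rH (φ u) (ψ v)

/-- `φψ` is an edge of the Hom-graph. -/
def HomEdge {α β : Type*} (rG : α → α → Prop) (rH : β → β → Prop) (φ ψ : α → β) : Prop :=
  HomArc rG rH φ ψ ∨ HomArc rG rH ψ φ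

/-- The contribution of the edge `c (c+1)` of `C` to the increase of `φ`:
`1` if increasing, `-1` if decreasing, `0` if stationary. -/
def edgeVal {m n : ℕ} (φ : ZMod m → ZMod n) (c : ZMod m) : ℤ :=
  if φ (c + 1) = φ c + 1 then 1 else if φ (c + 1) = φ c - 1 then -1 else 0

/-- The increase of a map between cycles: #increasing − #decreasing edges. -/
def increase {m n : ℕ} (φ : ZMod m → ZMod n) : ℤ :=
  ∑ j ∈ Finset.range m, edgeVal φ ((j : ℕ) : ZMod m)

/-- The increase of the subpath `c_a … c_{a+L}`. -/
def partialInc {m n : ℕ} (φ : ZMod m → ZMod n) (a : ZMod m) (L : ℕ) : ℤ :=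
  ∑ j ∈ Finset.range L, edgeVal φ (a + ((j : ℕ) : ZMod m))

/-- `φ` has wind `w`, i.e. its increase is `w * n`. -/
def HasWind {m n : ℕ} (φ : ZMod m → ZMod n) (w : ℤ) : Prop :=
  increase φ = w * (n : ℤ)

/-- A reflexive digraph cycle is non-contractible if it has length at least 4
or is a directed 3-cycle. -/
def NonContractible {n : ℕ} (f : ZMod n → Orient) : Prop :=
  4 ≤ n ∨ (n = 3 ∧ ((∀ i, f i = Orient.plus) ∨ (∀ i, f i = Orient.minus)))

/-- `φ` is increasing: every edge increasing or stationary, not all stationary. -/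
def IncMap {m n : ℕ} (φ : ZMod m → ZMod n) : Prop :=
  (∀ c, φ (c + 1) = φ c + 1 ∨ φ (c + 1) = φ c) ∧ ∃ c, φ (c + 1) = φ c + 1

/-- `φ` is decreasing: every edge decreasing. -/
def DecMap {m n : ℕ} (φ : ZMod m → ZMod n) : Prop :=
  ∀ c, φ (c + 1) = φ c - 1

/-- `φ` is monotone: increasing or decreasing. -/
def MonMap {m n : ℕ} (φ : ZMod m → ZMod n) : Prop :=
  IncMap φ ∨ DecMap φ

/-- `φ` is monotone in the weak sense where constant maps also count. -/
def MonOrConst {m n : ℕ} (φ : ZMod m → ZMod n) : Prop :=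
  (∀ c, φ (c + 1) = φ c + 1 ∨ φ (c + 1) = φ c) ∨ DecMap φ

/-- `Y ≤* X`: `Y` is a `*`-substring of `X`, via a strictly increasing selection
function `α` with `Y i = X (α i)` unless `Y i = *`. -/
def StarSub {p q : ℕ} (Y : Fin p → Orient) (X : Fin q → Orient) : Prop :=
  ∃ α : Fin p → Fin q, StrictMono α ∧ ∀ i, Y i = X (α i) ∨ Y i = Orient.star

/-- The orientation string of the (pointed) cycle `f`. -/
def cycStr {m : ℕ} (f : ZMod m → Orient) : Fin m → Orient :=
  fun j => f ((j : ℕ) : ZMod m)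

/-- The orientation string `σ^i(Y^k)` = `(σ^i Y)^k`: the `i`-th shift of the
`k`-fold concatenation of the string of the cycle `fY`. -/
def shiftPowStr {s : ℕ} (fY : ZMod s → Orient) (k : ℕ) (i : ZMod s) :
    Fin (k * s) → Orient :=
  fun j => fY (i + ((j : ℕ) : ZMod s))

/-- The orientation string `σ^i(Y)^k y_{i+1}` : the `i`-th shift of the `k`-fold
concatenation of the string of `fY`, extended by its own first letter. -/
def shiftPowExtStr {s : ℕ} (fY : ZMod s → Orient) (k : ℕ) (i : ZMod s) :
    Fin (k * s + 1) → Orient :=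
  fun j => fY (i + ((j : ℕ) : ZMod s))

/-- Every vertex that moves from `φ` to `ψ`, moves up. -/
def MovesUpOnly {m n : ℕ} (φ ψ : ZMod m → ZMod n) : Prop :=
  ∀ c, ψ c = φ c ∨ ψ c = φ c + 1

/-- Every vertex that moves from `φ` to `ψ`, moves down. -/
def MovesDownOnly {m n : ℕ} (φ ψ : ZMod m → ZMod n) : Prop :=
  ∀ c, ψ c = φ c ∨ ψ c = φ c - 1

/-- `φψ` is an up edge of the Hom-graph. -/
def UpEdge {m n : ℕ} (rC : ZMod m → ZMod m → Prop) (rD : ZMod n → ZMod n → Prop)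
    (φ ψ : ZMod m → ZMod n) : Prop :=
  HomEdge rC rD φ ψ ∧ MovesUpOnly φ ψ

/-- `φ` and `ψ` are joined by a path (walk) inside the induced subgraph on `S`. -/
def ConnIn {m n : ℕ} (rC : ZMod m → ZMod m → Prop) (rD : ZMod n → ZMod n → Prop)
    (S : Set (ZMod m → ZMod n)) (φ ψ : ZMod m → ZMod n) : Prop :=
  Relation.ReflTransGen (fun a b => a ∈ S ∧ b ∈ S ∧ HomEdge rC rD a b) φ ψ

/-- `ψ` is reachable from `φ` by a path of up edges inside `S`. -/
def UpReachIn {m n : ℕ} (rC : ZMod m → ZMod m → Prop) (rD : ZMod n → ZMod n → Prop)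
    (S : Set (ZMod m → ZMod n)) (φ ψ : ZMod m → ZMod n) : Prop :=
  Relation.ReflTransGen (fun a b => a ∈ S ∧ b ∈ S ∧ UpEdge rC rD a b) φ ψ

/-- One step of a path of up edges between homomorphisms. -/
def UpStep {m n : ℕ} (rC : ZMod m → ZMod m → Prop) (rD : ZMod n → ZMod n → Prop)
    (φ ψ : ZMod m → ZMod n) : Prop :=
  IsHom rC rD φ ∧ IsHom rC rD ψ ∧ UpEdge rC rD φ ψ

/-- The set of vertices on which `φ` and `φ'` differ. -/
def Neq {α β : Type*} (φ φ' : α → β) : Set α := {g | φ g ≠ φ' g}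

/-- The map `φ_T`, agreeing with `φ'` on `T` and with `φ` elsewhere. -/
noncomputable def refineMap {α β : Type*} (φ φ' : α → β) (T : Set α) : α → β :=
  fun g => if g ∈ T then φ' g else φ g

/-- The edge `φφ'` is non-refinable: no nonempty proper subset `T` of `Neq φ φ'`
yields a homomorphism `φ_T`. -/
def NonRefinable {α β : Type*} (rG : α → α → Prop) (rH : β → β → Prop)
    (φ φ' : α → β) : Prop :=
  ¬ ∃ T : Set α, T.Nonempty ∧ T ⊂ Neq φ φ' ∧ IsHom rG rH (refineMap φ φ' T)

/-- `T` is a strong component of the digraph `r`. -/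
def IsStrongComponent {α : Type*} (r : α → α → Prop) (T : Set α) : Prop :=
  T.Nonempty ∧ (∀ u ∈ T, ∀ v ∈ T, Relation.ReflTransGen r u v) ∧
    ∀ T' : Set α, T ⊆ T' → (∀ u ∈ T', ∀ v ∈ T', Relation.ReflTransGen r u v) → T' = T

/-- `T` has no arcs out to vertices not in `T`. -/
def IsTerminal {α : Type*} (r : α → α → Prop) (T : Set α) : Prop :=
  ∀ u ∈ T, ∀ v, r u v → v ∈ T

/-- `Mon_1(C,D;i)`: monotone wind-1 homomorphisms `φ` with `φ c₀ = i`. -/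
def Mon1 {m n : ℕ} (fC : ZMod m → Orient) (fD : ZMod n → Orient) (i : ZMod n) :
    Set (ZMod m → ZMod n) :=
  {φ | IsHom (cycRel fC) (cycRel fD) φ ∧ MonMap φ ∧ increase φ = (n : ℤ) ∧ φ 0 = i}

/-- A one-step up edge: an edge from `φ` obtained by moving all the vertices of a
subpath of `C` mapped to a single vertex `d` up to `d + 1`. -/
def OneStepUp {m n : ℕ} (rC : ZMod m → ZMod m → Prop) (rD : ZMod n → ZMod n → Prop)
    (φ φ' : ZMod m → ZMod n) : Prop :=
  HomEdge rC rD φ φ' ∧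
    ∃ (a : ZMod m) (k : ℕ) (d : ZMod n), k < m ∧
      (∀ j : ℕ, j ≤ k → φ (a + ((j : ℕ) : ZMod m)) = d) ∧
      ∀ c, φ' c = if ∃ j : ℕ, j ≤ k ∧ c = a + ((j : ℕ) : ZMod m) then d + 1 else φ c

/-- The number of increasing edges of `φ` among the first `j` edges of `C`. -/
def incBefore {m n : ℕ} (φ : ZMod m → ZMod n) (j : ℕ) : ℕ :=
  ((Finset.range j).filter fun t =>
    φ (((t : ℕ) : ZMod m) + 1) = φ ((t : ℕ) : ZMod m) + 1).card

/-- One cutback-pushing step: `φ'` is obtained from `φ` by replacing the values of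
`φ` on a cutback `c_a … c_{a+L}` by `φ a`. -/
def CutbackStep {m n : ℕ} (φ φ' : ZMod m → ZMod n) : Prop :=
  ∃ (a : ZMod m) (L : ℕ), L < m ∧ partialInc φ a L = 0 ∧
    (∀ j : ℕ, 0 < j → j < L → partialInc φ a j < 0) ∧
    ∀ c, φ' c = if ∃ j : ℕ, j ≤ L ∧ c = a + ((j : ℕ) : ZMod m) then φ a else φ c

/-- `Mon_1^+(C,D;i)`: wind-1 homomorphisms whose monotone push-up is in `Mon_1(C,D;i)`. -/
def Mon1Plus {m n : ℕ} (fC : ZMod m → Orient) (fD : ZMod n → Orient) (i : ZMod n) :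
    Set (ZMod m → ZMod n) :=
  {φ | IsHom (cycRel fC) (cycRel fD) φ ∧ increase φ = (n : ℤ) ∧
    ∃ ψ ∈ Mon1 fC fD i, Relation.ReflTransGen CutbackStep φ ψ}


/-!
A monotone wind-1 map `φ : C → D` with `φ c₀ = i` is determined by the set `S` of its increasing
edges: `φ c_j = i + #(S ∩ [0, j))`, and `φ` is a homomorphism exactly when `S` is the image of a
selection function exhibiting `σ^i(D) ≤* C`.

A one-step up edge from `Φ` into `Mon_1(C,D;i+1)` must raise `c₀` from `i` to `i + 1`, so it raises
a block of `C` through `c₀` on which `Φ = i`. The edge entering the block becomes increasing,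
with `c_p ↦ i`, and every edge of `Φ` from `c_p` on is stationary: appending `p` to `S` selects
`σ^i(D) y_{i+1}`. Conversely, given a selection of `σ^i(D) y_{i+1}` ending at `p`, the maximality of
`Φ` puts all of `S` before `p`; trading the first increasing edge of `Φ` for a new one at `p`
raises the block `c_{p+1} … c₀ … c_{min S}` and yields the required map of `Mon_1(C,D;i+1)`.
-/

open Finset

section Letters

def Orient.Matches (y x : Orient) : Prop := y = x ∨ y = Orient.star

variable {n : ℕ}

lemma cycRel_add_one_or {f : ZMod n → Orient} (d : ZMod n) :
    cycRel f d (d + 1) ∨ cycRel f (d + 1) d := by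
  cases h : f d
  · exact Or.inl (Or.inr (Or.inl ⟨rfl, by simp [h, Orient.fwd]⟩))
  · exact Or.inr (Or.inr (Or.inr ⟨rfl, by simp [h, Orient.bwd]⟩))
  · exact Or.inl (Or.inr (Or.inl ⟨rfl, by simp [h, Orient.fwd]⟩))

lemma NonContractible.three_le {f : ZMod n → Orient} (h : NonContractible f) : 3 ≤ n := by
  rcases h with h | ⟨h, -⟩ <;> omega

lemma two_ne_zero_zmod (hn : 3 ≤ n) : (2 : ZMod n) ≠ 0 := by
  have h : ((2 : ℕ) : ZMod n) ≠ 0 := by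
    rw [Ne, ZMod.natCast_eq_zero_iff]
    exact fun h => by have := Nat.le_of_dvd two_pos h; omega
  exact_mod_cast h

lemma eq_of_steps_to_succ (hn : 3 ≤ n) {x i : ZMod n} (h : i = x + 1 ∨ i = x)
    (h' : i + 1 = x + 1 ∨ i + 1 = x) : x = i := by
  have : Fact (1 < n) := ⟨by omega⟩
  rcases h' with h' | h'
  · exact (add_right_cancel h').symm
  · rcases h with h | h
    · exact absurd (by linear_combination h' - h) (two_ne_zero_zmod hn)
    · rw [← h] at h'
      simp at h'

end Letters

section HomGraph

variable {α β : Type*} {rG : α → α → Prop} {rH : β → β → Prop} {φ φ' : α → β}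

lemma homArc_of_move {B : Set α} {d d' : β} (hφ : IsHom rG rH φ) (hφ' : IsHom rG rH φ')
    (hB : ∀ c ∈ B, φ c = d ∧ φ' c = d') (hBc : ∀ c ∉ B, φ' c = φ c) (hd : rH d d') :
    HomArc rG rH φ φ' := by
  intro u v huv
  by_cases hv : v ∈ B
  · by_cases hu : u ∈ B
    · rw [(hB u hu).1, (hB v hv).2]
      exact hd
    · rw [← hBc u hu]
      exact hφ' u v huv
  · rw [hBc v hv]
    exact hφ u v huv

lemma homEdge_of_move {B : Set α} {d d' : β} (hφ : IsHom rG rH φ) (hφ' : IsHom rG rH φ')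
    (hB : ∀ c ∈ B, φ c = d ∧ φ' c = d') (hBc : ∀ c ∉ B, φ' c = φ c) (hd : rH d d' ∨ rH d' d) :
    HomEdge rG rH φ φ' :=
  hd.imp (homArc_of_move hφ hφ' hB hBc)
    (homArc_of_move hφ' hφ (fun c hc => (hB c hc).symm) (fun c hc => (hBc c hc).symm))

end HomGraph

section Counting

lemma card_filter_lt_succ (T : Finset ℕ) (v : ℕ) :
    #{t ∈ T | t < v + 1} = #{t ∈ T | t < v} + if v ∈ T then 1 else 0 := by
  have hsplit : {t ∈ T | t < v + 1} = {t ∈ T | t < v} ∪ {t ∈ T | t = v} := by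
    ext t
    simp only [mem_filter, mem_union, Nat.lt_succ_iff_lt_or_eq, and_or_left]
  rw [hsplit, card_union_of_disjoint (disjoint_filter.2 fun _ _ h h' => by omega), filter_eq']
  split_ifs <;> simp

lemma card_filter_lt_insert {X : Finset ℕ} {p : ℕ} (hp : p ∉ X) (v : ℕ) :
    #{t ∈ insert p X | t < v} = #{t ∈ X | t < v} + if p < v then 1 else 0 := by
  rw [filter_insert]
  split_ifs
  · rw [card_insert_of_notMem (fun h => hp (mem_filter.1 h).1)]
  · rfl

lemma card_filter_lt_erase {X : Finset ℕ} {s : ℕ} (hs : s ∈ X) (v : ℕ) :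
    #{t ∈ X.erase s | t < v} + (if s < v then 1 else 0) = #{t ∈ X | t < v} := by
  rw [filter_erase]
  split_ifs with h
  · exact card_erase_add_one (mem_filter.2 ⟨hs, h⟩)
  · rw [erase_eq_of_notMem (by simp [h]), add_zero]

lemma card_filter_lt_image {k : ℕ} {e : Fin k → ℕ} (he : StrictMono e) (j : Fin k) :
    #{s ∈ univ.image e | s < e j} = j := by
  have himage : {s ∈ univ.image e | s < e j} = (Iio j).image e := by
    ext s
    simp only [mem_filter, mem_image, mem_univ, true_and, mem_Iio]
    constructor
    · rintro ⟨⟨j', rfl⟩, h⟩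
      exact ⟨j', he.lt_iff_lt.1 h, rfl⟩
    · rintro ⟨j', h, rfl⟩
      exact ⟨⟨j', rfl⟩, he h⟩
  rw [himage, card_image_of_injective _ he.injective, Fin.card_Iio]

end Counting

section Selections

variable {m n : ℕ}

/-- `T` is the image of a selection function reading `σ^i(D)` (repeated) off `C`: the letter
read at a position of `T` is indexed by the rank of that position in `T`. -/
def IsSelection (fC : ZMod m → Orient) (fD : ZMod n → Orient) (i : ZMod n) (T : Finset ℕ) :
    Prop :=
  ∀ t ∈ T, t < m ∧ (fD (i + #{s ∈ T | s < t})).Matches (fC t)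

/-- `shiftPowStr fD 1 i` and `shiftPowExtStr fD 1 i` are, definitionally, `shiftStr fD i` at the
lengths `1 * n` and `1 * n + 1`. -/
def shiftStr (fD : ZMod n → Orient) (i : ZMod n) (k : ℕ) : Fin k → Orient :=
  fun j => fD (i + (j : ℕ))

variable {fC : ZMod m → Orient} {fD : ZMod n → Orient} {i : ZMod n}

lemma starSub_shiftStr_iff {k : ℕ} :
    StarSub (shiftStr fD i k) (cycStr fC) ↔ ∃ T : Finset ℕ, #T = k ∧ IsSelection fC fD i T := by
  constructor
  · rintro ⟨α, hα, hmatch⟩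
    have he : StrictMono fun j => (α j : ℕ) := Fin.val_strictMono.comp hα
    refine ⟨univ.image fun j => (α j : ℕ), by rw [card_image_of_injective _ he.injective]; simp,
      ?_⟩
    simp only [IsSelection, mem_image, mem_univ, true_and, forall_exists_index,
      forall_apply_eq_imp_iff]
    intro j
    rw [card_filter_lt_image he]
    exact ⟨(α j).isLt, hmatch j⟩
  · rintro ⟨T, hcard, hT⟩
    set e := T.orderEmbOfFin hcard
    have hrank (j : Fin k) : #{s ∈ T | s < e j} = j := by
      conv_lhs => rw [← image_orderEmbOfFin_univ T hcard]
      exact card_filter_lt_image e.strictMono j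
    refine ⟨fun j => ⟨e j, (hT _ (orderEmbOfFin_mem T hcard j)).1⟩,
      fun a b h => Fin.mk_lt_mk.2 (e.strictMono h), fun j => ?_⟩
    have := (hT _ (orderEmbOfFin_mem T hcard j)).2
    rwa [hrank] at this

lemma isSelection_insert_iff {S : Finset ℕ} {p : ℕ} (hSp : ∀ s ∈ S, s < p) :
    IsSelection fC fD i (insert p S) ↔
      IsSelection fC fD i S ∧ p < m ∧ (fD (i + #S)).Matches (fC p) := by
  have hp : p ∉ S := fun h => lt_irrefl p (hSp p h)
  have hrank (t : ℕ) (ht : t ∈ S) : #{s ∈ insert p S | s < t} = #{s ∈ S | s < t} := by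
    rw [card_filter_lt_insert hp, if_neg (hSp t ht).not_gt, add_zero]
  have hrank_p : #{s ∈ insert p S | s < p} = #S := by
    rw [card_filter_lt_insert hp, if_neg (lt_irrefl p), add_zero, filter_true_of_mem hSp]
  simp only [IsSelection, forall_mem_insert, hrank_p]
  constructor
  · rintro ⟨hpsel, hSsel⟩
    exact ⟨fun t ht => hrank t ht ▸ hSsel t ht, hpsel⟩
  · rintro ⟨hSsel, hpsel⟩
    exact ⟨hpsel, fun t ht => (hrank t ht).symm ▸ hSsel t ht⟩

lemma IsSelection.erase_min {S : Finset ℕ} (hS : IsSelection fC fD i S) {s₀ : ℕ} (hs₀ : s₀ ∈ S)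
    (hmin : ∀ s ∈ S, s₀ ≤ s) : IsSelection fC fD (i + 1) (S.erase s₀) := by
  intro t ht
  obtain ⟨hts₀, htS⟩ := mem_erase.1 ht
  have hrank := card_filter_lt_erase hs₀ t
  rw [if_pos (lt_of_le_of_ne (hmin t htS) (Ne.symm hts₀))] at hrank
  have hshift : i + 1 + (#{s ∈ S.erase s₀ | s < t} : ZMod n) = i + #{s ∈ S | s < t} := by
    rw [← hrank]
    push_cast
    ring
  exact ⟨(hS t htS).1, hshift ▸ (hS t htS).2⟩

lemma IsSelection.insert_erase_min {S : Finset ℕ} (hS : IsSelection fC fD i S) (hcard : #S = n)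
    {s₀ p : ℕ} (hs₀ : s₀ ∈ S) (hmin : ∀ s ∈ S, s₀ ≤ s) (hp : p < m) (hSp : ∀ s ∈ S, s < p)
    (hmatch : (fD i).Matches (fC p)) :
    IsSelection fC fD (i + 1) (insert p (S.erase s₀)) ∧ #(insert p (S.erase s₀)) = n := by
  have hSp' (s : ℕ) (hs : s ∈ S.erase s₀) : s < p := hSp s (mem_of_mem_erase hs)
  have hcard' : #(S.erase s₀) + 1 = n := by
    rw [card_erase_of_mem hs₀, hcard, Nat.sub_add_cancel (hcard ▸ card_pos.2 ⟨s₀, hs₀⟩)]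
  refine ⟨(isSelection_insert_iff hSp').2 ⟨hS.erase_min hs₀ hmin, hp, ?_⟩,
    by rw [card_insert_of_notMem fun h => lt_irrefl p (hSp' p h), hcard']⟩
  have hwrap : i + 1 + (#(S.erase s₀) : ZMod n) = i := by
    rw [add_assoc, add_comm 1, ← Nat.cast_add_one, hcard', ZMod.natCast_self, add_zero]
  rwa [hwrap]

end Selections

section IncreasingEdges

variable {m n : ℕ}

def StepsUp (φ : ZMod m → ZMod n) : Prop :=
  ∀ c, φ (c + 1) = φ c + 1 ∨ φ (c + 1) = φ c

def incSet (φ : ZMod m → ZMod n) : Finset ℕ :=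
  {t ∈ range m | φ (t + 1) = φ t + 1}

def stepMap (i : ZMod n) (T : Finset ℕ) : ZMod m → ZMod n :=
  fun c => i + #{t ∈ T | t < c.val}

lemma incBefore_eq_card_filter (φ : ZMod m → ZMod n) {j : ℕ} (hj : j ≤ m) :
    incBefore φ j = #{t ∈ incSet φ | t < j} := by
  unfold incBefore incSet
  rw [filter_filter]
  congr 1
  ext t
  simp only [mem_filter, mem_range]
  exact ⟨fun ⟨h, hφ⟩ => ⟨by omega, hφ, h⟩, fun ⟨_, hφ, h⟩ => ⟨h, hφ⟩⟩

lemma incBefore_succ (φ : ZMod m → ZMod n) (j : ℕ) :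
    incBefore φ (j + 1) = incBefore φ j + if φ (j + 1) = φ j + 1 then 1 else 0 := by
  unfold incBefore
  rw [range_add_one, filter_insert]
  split_ifs
  · rw [card_insert_of_notMem (by simp)]
  · rfl

variable [Fact (1 < n)] {φ : ZMod m → ZMod n}

lemma StepsUp.eq_add_incBefore (h : StepsUp φ) (v : ℕ) : φ v = φ 0 + incBefore φ v := by
  induction v with
  | zero => simp [incBefore]
  | succ v ih =>
    rw [incBefore_succ, Nat.cast_succ]
    rcases h v with hv | hv
    · rw [if_pos hv, hv, ih]
      push_cast
      ring
    · rw [if_neg (by rw [hv]; simp), hv, ih, add_zero]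

lemma StepsUp.edgeVal_eq (h : StepsUp φ) (c : ZMod m) :
    edgeVal φ c = if φ (c + 1) = φ c + 1 then 1 else 0 := by
  rcases h c with hc | hc
  · simp [edgeVal, hc]
  · simp [edgeVal, hc, eq_sub_iff_add_eq]

lemma StepsUp.increase_eq (h : StepsUp φ) : increase φ = #(incSet φ) := by
  rw [increase, incSet, card_filter]
  push_cast
  exact sum_congr rfl fun t _ => h.edgeVal_eq t

lemma StepsUp.eq_stepMap [NeZero m] (h : StepsUp φ) : φ = stepMap (φ 0) (incSet φ) := by
  funext c
  rw [stepMap, ← incBefore_eq_card_filter φ (ZMod.val_lt c).le, ← h.eq_add_incBefore,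
    ZMod.natCast_zmod_val]

end IncreasingEdges

section StepMap

variable {m n : ℕ} {i : ZMod n} {T : Finset ℕ}

lemma stepMap_zero : stepMap i T (0 : ZMod m) = i := by
  simp [stepMap]

lemma stepMap_natCast (hTm : ∀ t ∈ T, t < m) (hcard : #T = n) {v : ℕ} (hv : v ≤ m) :
    stepMap i T (v : ZMod m) = i + #{t ∈ T | t < v} := by
  rcases hv.lt_or_eq with hv | rfl
  · rw [stepMap, ZMod.val_cast_of_lt hv]
  · rw [ZMod.natCast_self, stepMap_zero, filter_true_of_mem hTm, hcard, ZMod.natCast_self,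
      add_zero]

lemma stepMap_add_one [NeZero m] (hTm : ∀ t ∈ T, t < m) (hcard : #T = n) (c : ZMod m) :
    stepMap i T (c + 1) = stepMap i T c + if c.val ∈ T then 1 else 0 := by
  have hc : c + 1 = ((c.val + 1 : ℕ) : ZMod m) := by
    push_cast
    rw [ZMod.natCast_zmod_val]
  rw [hc, stepMap_natCast hTm hcard (ZMod.val_lt c), card_filter_lt_succ, stepMap]
  push_cast
  ring

lemma stepsUp_stepMap [NeZero m] (hTm : ∀ t ∈ T, t < m) (hcard : #T = n) :
    StepsUp (stepMap i T : ZMod m → ZMod n) := fun c => by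
  rw [stepMap_add_one hTm hcard]
  split_ifs <;> simp

lemma incSet_stepMap [NeZero m] [Fact (1 < n)] (hTm : ∀ t ∈ T, t < m) (hcard : #T = n) :
    incSet (stepMap i T : ZMod m → ZMod n) = T := by
  ext t
  simp only [incSet, mem_filter, mem_range, stepMap_add_one hTm hcard]
  constructor
  · rintro ⟨ht, h⟩
    rw [ZMod.val_cast_of_lt ht] at h
    by_contra hT
    simp [hT] at h
  · intro ht
    rw [ZMod.val_cast_of_lt (hTm t ht), if_pos ht]
    exact ⟨hTm t ht, rfl⟩

end StepMap

section Homomorphisms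

variable {m n : ℕ} {fC : ZMod m → Orient} {fD : ZMod n → Orient} {φ : ZMod m → ZMod n}

lemma IsHom.matches_of_inc (hn : 3 ≤ n) (hφ : IsHom (cycRel fC) (cycRel fD) φ) {c : ZMod m}
    (hc : φ (c + 1) = φ c + 1) : (fD (φ c)).Matches (fC c) := by
  have : Fact (1 < n) := ⟨by omega⟩
  have h2 : (2 : ZMod n) ≠ 0 := two_ne_zero_zmod hn
  have hfwd : (fC c).fwd → (fD (φ c)).fwd := fun hf => by
    have := hφ c (c + 1) (Or.inr (Or.inl ⟨rfl, hf⟩))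
    rw [hc] at this
    rcases this with h | ⟨-, h⟩ | ⟨h, -⟩
    · simp at h
    · exact h
    · exact absurd (by linear_combination -h) h2
  have hbwd : (fC c).bwd → (fD (φ c)).bwd := fun hf => by
    have := hφ (c + 1) c (Or.inr (Or.inr ⟨rfl, hf⟩))
    rw [hc] at this
    rcases this with h | ⟨h, -⟩ | ⟨-, h⟩
    · simp at h
    · exact absurd (by linear_combination -h) h2
    · exact h
  unfold Orient.Matches
  cases hC : fC c <;> cases hD : fD (φ c) <;> simp_all [Orient.fwd, Orient.bwd]

lemma isHom_of_matches (h : StepsUp φ)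
    (hmatch : ∀ c, φ (c + 1) = φ c + 1 → (fD (φ c)).Matches (fC c)) :
    IsHom (cycRel fC) (cycRel fD) φ := by
  have hletter {c : ZMod m} (hc : φ (c + 1) = φ c + 1) {P : Orient → Prop} (hstar : P .star)
      (hP : P (fC c)) : P (fD (φ c)) := by
    rcases hmatch c hc with hm | hm <;> rw [hm] <;> assumption
  rintro u v (rfl | ⟨rfl, hf⟩ | ⟨rfl, hf⟩)
  · exact Or.inl rfl
  · rcases h u with hu | hu
    · exact Or.inr (Or.inl ⟨hu, hletter hu trivial hf⟩)
    · exact Or.inl hu.symm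
  · rcases h v with hv | hv
    · exact Or.inr (Or.inr ⟨hv, hletter hv trivial hf⟩)
    · exact Or.inl hv

end Homomorphisms

section MonotoneWindOne

variable {m n : ℕ} {fC : ZMod m → Orient} {fD : ZMod n → Orient} {i : ZMod n}
  {φ : ZMod m → ZMod n}

lemma ne_zero_of_mem_mon1 (hn : n ≠ 0) (hφ : φ ∈ Mon1 fC fD i) : m ≠ 0 := by
  rintro rfl
  have h := hφ.2.2.1
  simp only [increase, range_zero, sum_empty] at h
  omega

lemma incMap_of_mem_mon1 (hn : 3 ≤ n) (hφ : φ ∈ Mon1 fC fD i) : IncMap φ := by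
  obtain ⟨-, hinc | hdec, hwind, -⟩ := hφ
  · exact hinc
  · have hedge (c : ZMod m) : edgeVal φ c = -1 := by
      have hne : φ c - 1 ≠ φ c + 1 := fun h =>
        two_ne_zero_zmod hn (by linear_combination -h)
      simp [edgeVal, hdec c, hne]
    simp only [increase, hedge, sum_const, card_range, smul_neg, nsmul_eq_mul, mul_one] at hwind
    omega

lemma stepsUp_of_mem_mon1 (hn : 3 ≤ n) (hφ : φ ∈ Mon1 fC fD i) : StepsUp φ :=
  (incMap_of_mem_mon1 hn hφ).1

lemma card_incSet_of_mem_mon1 (hn : 3 ≤ n) (hφ : φ ∈ Mon1 fC fD i) : #(incSet φ) = n := by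
  have : Fact (1 < n) := ⟨by omega⟩
  have h := (stepsUp_of_mem_mon1 hn hφ).increase_eq
  rw [hφ.2.2.1] at h
  exact_mod_cast h.symm

lemma eq_stepMap_of_mem_mon1 [NeZero m] (hn : 3 ≤ n) (hφ : φ ∈ Mon1 fC fD i) :
    φ = stepMap i (incSet φ) := by
  have : Fact (1 < n) := ⟨by omega⟩
  rw [← hφ.2.2.2]
  exact (stepsUp_of_mem_mon1 hn hφ).eq_stepMap

lemma isSelection_incSet_of_mem_mon1 [NeZero m] (hn : 3 ≤ n) (hφ : φ ∈ Mon1 fC fD i) :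
    IsSelection fC fD i (incSet φ) := by
  intro t ht
  obtain ⟨htm, hinc⟩ := mem_filter.1 ht
  have hmatch := hφ.1.matches_of_inc hn hinc
  rw [eq_stepMap_of_mem_mon1 hn hφ, stepMap, ZMod.val_cast_of_lt (mem_range.1 htm)] at hmatch
  exact ⟨mem_range.1 htm, hmatch⟩

lemma stepMap_mem_mon1 [NeZero m] (hn : 3 ≤ n) {T : Finset ℕ} (hT : IsSelection fC fD i T)
    (hcard : #T = n) : stepMap i T ∈ Mon1 fC fD i := by
  have : Fact (1 < n) := ⟨by omega⟩
  have hTm (t : ℕ) (ht : t ∈ T) : t < m := (hT t ht).1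
  have hsteps := stepsUp_stepMap (i := i) hTm hcard
  have hinc (c : ZMod m) : stepMap i T (c + 1) = stepMap i T c + 1 ↔ c.val ∈ T := by
    rw [stepMap_add_one hTm hcard]
    split_ifs with h <;> simp [h]
  obtain ⟨t, ht⟩ : T.Nonempty := by
    rw [← card_pos, hcard]
    omega
  refine ⟨isHom_of_matches hsteps fun c hc => ?_, Or.inl ⟨hsteps, ⟨t, ?_⟩⟩, ?_, stepMap_zero⟩
  · have := (hT _ ((hinc c).1 hc)).2
    rwa [ZMod.natCast_zmod_val] at this
  · rw [hinc, ZMod.val_cast_of_lt (hTm t ht)]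
    exact ht
  · rw [hsteps.increase_eq, incSet_stepMap hTm hcard, hcard]

end MonotoneWindOne

section Arcs

variable {m n : ℕ}

lemma val_natCast_sub_natCast {v w : ℕ} (hv : v < m) (hw : w ≤ m) :
    ((v : ZMod m) - w).val = if w ≤ v then v - w else v + m - w := by
  split_ifs with h
  · rw [← Nat.cast_sub h, ZMod.val_cast_of_lt (by omega)]
  · have hcast : (v : ZMod m) - w = ((v + m - w : ℕ) : ZMod m) := by
      rw [Nat.cast_sub (by omega), Nat.cast_add, ZMod.natCast_self, add_zero]
    rw [hcast, ZMod.val_cast_of_lt (by omega)]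

lemma exists_le_eq_add_iff [NeZero m] {a c : ZMod m} {k : ℕ} :
    (∃ j : ℕ, j ≤ k ∧ c = a + j) ↔ (c - a).val ≤ k := by
  constructor
  · rintro ⟨j, hj, rfl⟩
    rw [add_sub_cancel_left, ZMod.val_natCast]
    exact (Nat.mod_le j m).trans hj
  · exact fun h => ⟨_, h, by rw [ZMod.natCast_zmod_val, add_sub_cancel]⟩

lemma oneStepUp_iff [NeZero m] {rC : ZMod m → ZMod m → Prop} {rD : ZMod n → ZMod n → Prop}
    {φ φ' : ZMod m → ZMod n} :
    OneStepUp rC rD φ φ' ↔ HomEdge rC rD φ φ' ∧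
      ∃ (a : ZMod m) (k : ℕ) (d : ZMod n), k < m ∧ (∀ c, (c - a).val ≤ k → φ c = d) ∧
        ∀ c, φ' c = if (c - a).val ≤ k then d + 1 else φ c := by
  simp only [OneStepUp, exists_le_eq_add_iff]
  refine and_congr_right fun _ => exists_congr fun a => exists_congr fun k => exists_congr
    fun d => and_congr_right fun _ => and_congr_left fun _ => ⟨fun h c hc => ?_, fun h j hj => ?_⟩
  · obtain ⟨j, hj, rfl⟩ := exists_le_eq_add_iff.2 hc
    exact h j hj
  · exact h _ (exists_le_eq_add_iff.1 ⟨j, hj, rfl⟩)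

end Arcs

section OneStepUp

variable {m n : ℕ} [NeZero m] {fC : ZMod m → Orient} {fD : ZMod n → Orient} {i : ZMod n}
  {Φ φ' : ZMod m → ZMod n}

lemma exists_raised_tail (hn : 3 ≤ n) (hΦ : Φ ∈ Mon1 fC fD i) (hφ' : φ' ∈ Mon1 fC fD (i + 1))
    (hup : OneStepUp (cycRel fC) (cycRel fD) Φ φ') :
    ∃ p < m, Φ p = i ∧ φ' p = i ∧ φ' (p + 1) = i + 1 ∧ ∀ j, p < j → j < m → Φ j = i := by
  have : Fact (1 < n) := ⟨by omega⟩
  obtain ⟨-, a, k, d, -, hconst, hφ'eq⟩ := oneStepUp_iff.1 hup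
  obtain ⟨p, hp, rfl⟩ : ∃ p < m, a = ((p + 1 : ℕ) : ZMod m) :=
    ⟨(a - 1).val, ZMod.val_lt _, by push_cast; rw [ZMod.natCast_zmod_val, sub_add_cancel]⟩
  have hraised₀ : ((0 : ℕ) - ((p + 1 : ℕ) : ZMod m)).val ≤ k := by
    by_contra h
    have := hφ'eq 0
    rw [Nat.cast_zero] at h
    rw [if_neg h, hφ'.2.2.2, hΦ.2.2.2] at this
    simp at this
  have hd : i = d := by
    have := hφ'eq 0
    rw [← Nat.cast_zero, if_pos hraised₀, Nat.cast_zero, hφ'.2.2.2] at this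
    exact add_right_cancel this
  subst hd
  rw [val_natCast_sub_natCast (NeZero.pos m) (by omega), if_neg (by omega)] at hraised₀
  -- `Φ` is not constant, so the raised block is not all of `C`.
  have hk : k < m - 1 := by
    by_contra hk
    obtain ⟨c, hc⟩ := (incMap_of_mem_mon1 hn hΦ).2
    have hall (c : ZMod m) : Φ c = i :=
      hconst c (by have := ZMod.val_lt (c - ((p + 1 : ℕ) : ZMod m)); omega)
    rw [hall, hall] at hc
    simp at hc
  have hcast : (p : ZMod m) + 1 = ((p + 1 : ℕ) : ZMod m) := by push_cast; rfl
  have hφ'p : φ' p = Φ p := by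
    rw [hφ'eq, if_neg]
    rw [val_natCast_sub_natCast hp (by omega), if_neg (by omega)]
    omega
  have hφ'p1 : φ' (p + 1) = i + 1 := by rw [hφ'eq, hcast, sub_self, if_pos (by simp)]
  have hΦp1 : Φ (p + 1) = i := hconst _ (by rw [hcast, sub_self]; simp)
  have hΦp : Φ p = i := by
    have h := stepsUp_of_mem_mon1 hn hΦ p
    have h' := stepsUp_of_mem_mon1 hn hφ' p
    rw [hΦp1] at h
    rw [hφ'p1, hφ'p] at h'
    exact eq_of_steps_to_succ hn h h'
  refine ⟨p, hp, hΦp, hφ'p.trans hΦp, hφ'p1, fun j hpj hjm => hconst _ ?_⟩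
  rw [val_natCast_sub_natCast hjm (by omega), if_pos (by omega : p + 1 ≤ j)]
  omega

lemma exists_lt_of_oneStepUp (hn : 3 ≤ n) (hΦ : Φ ∈ Mon1 fC fD i)
    (hφ' : φ' ∈ Mon1 fC fD (i + 1)) (hup : OneStepUp (cycRel fC) (cycRel fD) Φ φ') :
    ∃ p < m, (∀ s ∈ incSet Φ, s < p) ∧ (fD i).Matches (fC p) := by
  have : Fact (1 < n) := ⟨by omega⟩
  obtain ⟨p, hp, hΦp, hφ'p, hφ'p1, htail⟩ := exists_raised_tail hn hΦ hφ' hup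
  refine ⟨p, hp, fun s hs => ?_, ?_⟩
  · obtain ⟨hsm, hinc⟩ := mem_filter.1 hs
    rw [mem_range] at hsm
    by_contra hps
    have hΦs : Φ s = i := by
      rcases (not_lt.1 hps).eq_or_lt with rfl | hps
      · exact hΦp
      · exact htail s hps hsm
    have hΦs1 : Φ (s + 1) = i := by
      rw [← Nat.cast_succ]
      rcases (Nat.succ_le_of_lt hsm).lt_or_eq with h | h
      · exact htail _ (by omega) h
      · rw [h, ZMod.natCast_self, hΦ.2.2.2]
    rw [hΦs, hΦs1] at hinc
    simp at hinc
  · have := hφ'.1.matches_of_inc hn (c := (p : ZMod m)) (by rw [hφ'p1, hφ'p])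
    rwa [hφ'p] at this

end OneStepUp

section Raising

variable {m n : ℕ}

lemma val_sub_natCast_le_iff [NeZero m] {p s₀ : ℕ} (hp : p < m) (c : ZMod m) :
    (c - ((p + 1 : ℕ) : ZMod m)).val ≤ m - (p + 1) + s₀ ↔ p < c.val ∨ c.val ≤ s₀ := by
  conv_lhs => rw [← ZMod.natCast_zmod_val c]
  have hc := ZMod.val_lt c
  rw [val_natCast_sub_natCast hc (by omega)]
  split_ifs <;> omega

lemma stepMap_insert_erase_min {i : ZMod n} {S : Finset ℕ} {s₀ p : ℕ} (hs₀ : s₀ ∈ S)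
    (hmin : ∀ s ∈ S, s₀ ≤ s) (hSp : ∀ s ∈ S, s < p) (hcard : #S = n) (c : ZMod m) :
    stepMap (i + 1) (insert p (S.erase s₀)) c =
      if p < c.val ∨ c.val ≤ s₀ then i + 1 else stepMap i S c := by
  have hpS : p ∉ S.erase s₀ := fun h => lt_irrefl p (hSp p (mem_of_mem_erase h))
  have hins := card_filter_lt_insert hpS c.val
  have hers := card_filter_lt_erase hs₀ c.val
  simp only [stepMap]
  by_cases hpc : p < c.val
  · have hall : #{s ∈ S | s < c.val} = n := by
      rw [filter_true_of_mem fun s hs => (hSp s hs).trans hpc, hcard]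
    rw [if_pos hpc] at hins
    rw [if_pos ((hSp s₀ hs₀).trans hpc)] at hers
    rw [if_pos (Or.inl hpc), hins, show #{s ∈ S.erase s₀ | s < c.val} + 1 = n by omega,
      ZMod.natCast_self, add_zero]
  · rw [if_neg hpc, add_zero] at hins
    by_cases hcs₀ : c.val ≤ s₀
    · have hnone : #{s ∈ S | s < c.val} = 0 := by
        rw [card_eq_zero, filter_eq_empty_iff]
        exact fun s hs => not_lt.2 (hcs₀.trans (hmin s hs))
      rw [if_neg (not_lt.2 hcs₀), add_zero] at hers
      rw [if_pos (Or.inr hcs₀), hins, hers, hnone, Nat.cast_zero, add_zero]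
    · rw [if_pos (not_le.1 hcs₀)] at hers
      rw [if_neg (by tauto), hins, ← hers]
      push_cast
      ring

lemma stepMap_eq_of_lt_or_le {i : ZMod n} {S : Finset ℕ} {s₀ p : ℕ} (hmin : ∀ s ∈ S, s₀ ≤ s)
    (hSp : ∀ s ∈ S, s < p) (hcard : #S = n) {c : ZMod m} (hc : p < c.val ∨ c.val ≤ s₀) :
    stepMap i S c = i := by
  rcases hc with hpc | hcs₀
  · rw [stepMap, filter_true_of_mem fun s hs => (hSp s hs).trans hpc, hcard, ZMod.natCast_self,
      add_zero]
  · rw [stepMap, filter_false_of_mem fun s hs => not_lt.2 (hcs₀.trans (hmin s hs)), card_empty,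
      Nat.cast_zero, add_zero]

variable [NeZero m] {fC : ZMod m → Orient} {fD : ZMod n → Orient} {i : ZMod n}
  {Φ : ZMod m → ZMod n}

lemma exists_oneStepUp_of_lt (hn : 3 ≤ n) (hΦ : Φ ∈ Mon1 fC fD i) {p : ℕ} (hp : p < m)
    (hSp : ∀ s ∈ incSet Φ, s < p) (hmatch : (fD i).Matches (fC p)) :
    ∃ φ' ∈ Mon1 fC fD (i + 1), OneStepUp (cycRel fC) (cycRel fD) Φ φ' := by
  set S := incSet Φ
  have hcard : #S = n := card_incSet_of_mem_mon1 hn hΦ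
  have hne : S.Nonempty := by
    rw [← card_pos, hcard]
    omega
  set s₀ := S.min' hne
  have hs₀ : s₀ ∈ S := min'_mem S hne
  have hmin (s : ℕ) (hs : s ∈ S) : s₀ ≤ s := min'_le S s hs
  have hs₀p : s₀ < p := hSp s₀ hs₀
  obtain ⟨hsel, hcard'⟩ := (isSelection_incSet_of_mem_mon1 hn hΦ).insert_erase_min hcard hs₀ hmin
    hp hSp hmatch
  have hφ' := stepMap_mem_mon1 hn hsel hcard'
  have hΦeq := eq_stepMap_of_mem_mon1 hn hΦ
  have hval := stepMap_insert_erase_min (i := i) (m := m) hs₀ hmin hSp hcard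
  have hraised (c : ZMod m) (hc : p < c.val ∨ c.val ≤ s₀) : Φ c = i := by
    rw [hΦeq]
    exact stepMap_eq_of_lt_or_le hmin hSp hcard hc
  have hedge : HomEdge (cycRel fC) (cycRel fD) Φ (stepMap (i + 1) (insert p (S.erase s₀))) :=
    homEdge_of_move (B := {c | p < c.val ∨ c.val ≤ s₀}) hΦ.1 hφ'.1
      (fun c (hc : p < c.val ∨ c.val ≤ s₀) => ⟨hraised c hc, by rw [hval, if_pos hc]⟩)
      (fun c (hc : ¬(p < c.val ∨ c.val ≤ s₀)) => by rw [hval, if_neg hc, ← hΦeq])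
      (cycRel_add_one_or i)
  -- The raised block is `c_{p+1} … c₀ … c_{s₀}`.
  refine ⟨_, hφ', oneStepUp_iff.2 ⟨hedge, ((p + 1 : ℕ) : ZMod m), m - (p + 1) + s₀, i, by omega,
    fun c hc => hraised c ((val_sub_natCast_le_iff hp c).1 hc), fun c => ?_⟩⟩
  rw [hval, ← hΦeq]
  exact if_congr (val_sub_natCast_le_iff hp c).symm rfl rfl

end Raising

section Main

variable {m n : ℕ} [NeZero m] {fC : ZMod m → Orient} {fD : ZMod n → Orient} {i : ZMod n}
  {Φ : ZMod m → ZMod n}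

lemma exists_oneStepUp_iff (hn : 3 ≤ n) (hΦ : Φ ∈ Mon1 fC fD i) :
    (∃ φ' ∈ Mon1 fC fD (i + 1), OneStepUp (cycRel fC) (cycRel fD) Φ φ') ↔
      ∃ p < m, (∀ s ∈ incSet Φ, s < p) ∧ (fD i).Matches (fC p) :=
  ⟨fun ⟨_, hφ', hup⟩ => exists_lt_of_oneStepUp hn hΦ hφ' hup,
    fun ⟨_, hp, hSp, hmatch⟩ => exists_oneStepUp_of_lt hn hΦ hp hSp hmatch⟩

lemma starSub_shiftPowExtStr_of_lt (hn : 3 ≤ n) (hΦ : Φ ∈ Mon1 fC fD i) {p : ℕ} (hp : p < m)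
    (hSp : ∀ s ∈ incSet Φ, s < p) (hmatch : (fD i).Matches (fC p)) :
    StarSub (shiftPowExtStr fD 1 i) (cycStr fC) := by
  have hcard := card_incSet_of_mem_mon1 hn hΦ
  refine starSub_shiftStr_iff.2 ⟨insert p (incSet Φ), ?_,
    (isSelection_insert_iff hSp).2 ⟨isSelection_incSet_of_mem_mon1 hn hΦ, hp, ?_⟩⟩
  · rw [card_insert_of_notMem fun h => lt_irrefl p (hSp p h), hcard, one_mul]
  · rwa [hcard, ZMod.natCast_self, add_zero]

lemma exists_lt_of_starSub_shiftPowExtStr (hn : 3 ≤ n) (hΦ : Φ ∈ Mon1 fC fD i)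
    (hmax : ∀ φ ∈ Mon1 fC fD i, ∀ j : ℕ, j ≤ m → incBefore φ j ≤ incBefore Φ j)
    (h : StarSub (shiftPowExtStr fD 1 i) (cycStr fC)) :
    ∃ p < m, (∀ s ∈ incSet Φ, s < p) ∧ (fD i).Matches (fC p) := by
  have : Fact (1 < n) := ⟨by omega⟩
  obtain ⟨T', hcard', hT'⟩ := starSub_shiftStr_iff.1 h
  have hne : T'.Nonempty := by
    rw [← card_pos, hcard']
    omega
  set p := T'.max' hne
  set T := T'.erase p
  have hTp (t : ℕ) (ht : t ∈ T) : t < p :=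
    lt_of_le_of_ne (le_max' T' t (mem_of_mem_erase ht)) (ne_of_mem_erase ht)
  rw [← insert_erase (max'_mem T' hne)] at hT'
  obtain ⟨hT, hp, hmatch⟩ := (isSelection_insert_iff hTp).1 hT'
  have hcard : #T = n := by
    rw [card_erase_of_mem (max'_mem T' hne), hcard']
    simp
  rw [hcard, ZMod.natCast_self, add_zero] at hmatch
  refine ⟨p, hp, ?_, hmatch⟩
  -- `T` selects `σ^i(D)` before `p`, so the competitor `stepMap i T` has all `n` increasing
  -- edges before `p`; by maximality so does `Φ`.
  have hle := hmax _ (stepMap_mem_mon1 hn hT hcard) p hp.le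
  rw [incBefore_eq_card_filter _ hp.le, incBefore_eq_card_filter _ hp.le,
    incSet_stepMap (fun t ht => (hT t ht).1) hcard, filter_true_of_mem hTp, hcard] at hle
  exact card_filter_eq_iff.1
    (le_antisymm (card_filter_le _ _) ((card_incSet_of_mem_mon1 hn hΦ).trans_le hle))

lemma starSub_shiftPowExtStr_iff (hn : 3 ≤ n) (hΦ : Φ ∈ Mon1 fC fD i)
    (hmax : ∀ φ ∈ Mon1 fC fD i, ∀ j : ℕ, j ≤ m → incBefore φ j ≤ incBefore Φ j) :
    StarSub (shiftPowExtStr fD 1 i) (cycStr fC) ↔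
      ∃ p < m, (∀ s ∈ incSet Φ, s < p) ∧ (fD i).Matches (fC p) :=
  ⟨exists_lt_of_starSub_shiftPowExtStr hn hΦ hmax,
    fun ⟨_, hp, hSp, hmatch⟩ => starSub_shiftPowExtStr_of_lt hn hΦ hp hSp hmatch⟩

end Main

/-- `hmax` is the maximality of `Φ = Φ_i^M` in `Mon_1(C,D;i)`: `α_Φ ≤ α_φ` pointwise iff, on every
initial segment of `C`, `Φ` has at least as many increasing edges as `φ`. -/
theorem max_element_one_step_up_iff_general (m n : ℕ)
    (fC : ZMod m → Orient) (fD : ZMod n → Orient) (hD : NonContractible fD)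
    (i : ZMod n)
    (Φ : ZMod m → ZMod n) (hΦ : Φ ∈ Mon1 fC fD i)
    (hmax : ∀ φ ∈ Mon1 fC fD i, ∀ j : ℕ, j ≤ m → incBefore φ j ≤ incBefore Φ j) :
    (∃ φ' ∈ Mon1 fC fD (i + 1), OneStepUp (cycRel fC) (cycRel fD) Φ φ') ↔
      StarSub (shiftPowExtStr fD 1 i) (cycStr fC) := by
  have hn := hD.three_le
  have : NeZero m := ⟨ne_zero_of_mem_mon1 (by omega) hΦ⟩
  exact (exists_oneStepUp_iff hn hΦ).trans (starSub_shiftPowExtStr_iff hn hΦ hmax).symm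

/-- for the maximum element `Φ_i^M` of `Mon_1(C,D;i)` (maximum in the
order `φ ≥ φ'` iff the selection function of `φ` is pointwise at most that of `φ'`,
equivalently `φ` has at least as many increasing edges among every initial segment),
there is a monotone one-step up edge from `Φ_i^M` to some map of `Mon_1(C,D;i+1)`
iff `σ^i(D) y_{i+1} ≤* C`. -/
theorem max_element_one_step_up_iff (m n : ℕ) (hm : 3 ≤ m)
    (fC : ZMod m → Orient) (fD : ZMod n → Orient) (hD : NonContractible fD)
    (i : ZMod n) (hsub : StarSub (shiftPowStr fD 1 i) (cycStr fC))
    (Φ : ZMod m → ZMod n) (hΦ : Φ ∈ Mon1 fC fD i)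
    (hmax : ∀ φ ∈ Mon1 fC fD i, ∀ j : ℕ, j ≤ m → incBefore φ j ≤ incBefore Φ j) :
    (∃ φ' ∈ Mon1 fC fD (i + 1), OneStepUp (cycRel fC) (cycRel fD) Φ φ') ↔
      StarSub (shiftPowExtStr fD 1 i) (cycStr fC) :=
  max_element_one_step_up_iff_general m n fC fD hD i Φ hΦ hmax

end Recon
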